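/- Let B = {c_1, …, c_L} ⊂ ℝ with c_1 < ⋯ < c_L and σ > 0. Then ∫_ℝ (argmin_{x ∈ B} |σz − x|) · z · e^{−z²/2} dz/√(2π) = (1/√(2π)) Σ_{i=2}^L (c_i − c_{i-1}) · exp(−(c_i + c_{i-1})²/(8σ²)). -/

import Mathlib

/-!
Off the finitely many midpoints `mᵢ = (cᵢ + cᵢ₋₁)/2`, a nearest-point selector is the step
function `c₀ + Σᵢ (cᵢ - cᵢ₋₁) 1{y > mᵢ}`, so `N(σz)` agrees a.e. with a step function in `z`
jumping at `mᵢ/σ`. Since `z e^{-z²/2}` is odd and is the derivative of `-e^{-z²/2}`, the constant term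
integrates to `0` and each jump contributes `(cᵢ - cᵢ₋₁) e^{-(mᵢ/σ)²/2}`.
-/

open MeasureTheory Real Set Filter Topology

lemma hasDerivAt_neg_exp_neg_sq_div_two (x : ℝ) :
    HasDerivAt (fun z : ℝ => -exp (-z ^ 2 / 2)) (x * exp (-x ^ 2 / 2)) x := by
  refine (((hasDerivAt_pow 2 x).neg.div_const 2).exp).neg.congr_deriv ?_
  simp only [Pi.neg_apply]
  ring

lemma tendsto_exp_neg_sq_div_two_atTop :
    Tendsto (fun z : ℝ => exp (-z ^ 2 / 2)) atTop (𝓝 0) :=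
  tendsto_exp_atBot.comp <|
    (tendsto_neg_atTop_atBot.comp (tendsto_pow_atTop two_ne_zero)).atBot_div_const two_pos

lemma integrable_mul_exp_neg_sq_div_two : Integrable fun z : ℝ => z * exp (-z ^ 2 / 2) := by
  convert integrable_mul_exp_neg_mul_sq (b := (1 / 2 : ℝ)) (by norm_num) using 4
  ring

lemma integral_Ioi_mul_exp_neg_sq_div_two (t : ℝ) :
    ∫ z in Ioi t, z * exp (-z ^ 2 / 2) = exp (-t ^ 2 / 2) := by
  simpa using integral_Ioi_of_hasDerivAt_of_tendsto'
    (fun x _ => hasDerivAt_neg_exp_neg_sq_div_two x)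
    integrable_mul_exp_neg_sq_div_two.integrableOn tendsto_exp_neg_sq_div_two_atTop.neg

lemma integral_mul_exp_neg_sq_div_two : ∫ z : ℝ, z * exp (-z ^ 2 / 2) = 0 := by
  have h := integral_neg_eq_self (fun z : ℝ => z * exp (-z ^ 2 / 2)) volume
  simp only [neg_sq, neg_mul, integral_neg] at h
  linarith

lemma eq_add_sum_Ico_ite_sub (c : ℕ → ℝ) {j L : ℕ} (hj : j < L) :
    c j = c 0 + ∑ i ∈ Finset.Ico 1 L, if i ≤ j then c i - c (i - 1) else 0 := by
  have hfilter : {i ∈ Finset.Ico 1 L | i ≤ j} = Finset.Ico 1 (j + 1) := by ext; simp; omega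
  rw [← Finset.sum_filter, hfilter, Finset.sum_Ico_eq_sum_range, Finset.eq_sum_range_sub c j]
  simp [add_comm]

lemma integral_step_mul_mul_exp_neg_sq_div_two {ι : Type*} (s : Finset ι) (a : ℝ)
    (d t : ι → ℝ) :
    ∫ z : ℝ, (a + ∑ i ∈ s, (Ioi (t i)).indicator (fun _ => d i) z) * (z * exp (-z ^ 2 / 2))
      = ∑ i ∈ s, d i * exp (-t i ^ 2 / 2) := by
  have hg := integrable_mul_exp_neg_sq_div_two
  have hstep :
      ∀ i ∈ s, Integrable ((Ioi (t i)).indicator fun z => d i * (z * exp (-z ^ 2 / 2))) :=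
    fun i _ => (hg.const_mul (d i)).indicator measurableSet_Ioi
  have hsplit : (fun z : ℝ => (a + ∑ i ∈ s, (Ioi (t i)).indicator (fun _ => d i) z) *
      (z * exp (-z ^ 2 / 2))) = fun z => a * (z * exp (-z ^ 2 / 2)) +
        ∑ i ∈ s, (Ioi (t i)).indicator (fun z => d i * (z * exp (-z ^ 2 / 2))) z := by
    ext z
    simp only [add_mul, Finset.sum_mul, indicator_mul_left]
  rw [hsplit, integral_add (hg.const_mul a) (integrable_finsetSum s hstep), integral_const_mul,
    integral_mul_exp_neg_sq_div_two, mul_zero, zero_add, integral_finsetSum s hstep]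
  refine Finset.sum_congr rfl fun i _ => ?_
  rw [integral_indicator measurableSet_Ioi, integral_const_mul, integral_Ioi_mul_exp_neg_sq_div_two]

lemma abs_sub_lt_abs_sub_of_midpoint_lt {a b y : ℝ} (hab : a < b) (h : (a + b) / 2 < y) :
    |y - b| < |y - a| := by
  rw [← sq_lt_sq]
  nlinarith

lemma abs_sub_lt_abs_sub_of_lt_midpoint {a b y : ℝ} (hab : a < b) (h : y < (a + b) / 2) :
    |y - a| < |y - b| := by
  rw [← sq_lt_sq]
  nlinarith

section NearestPoint

variable {L : ℕ} {c : ℕ → ℝ} {y : ℝ} {j : ℕ}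

lemma midpoint_lt_iff_le_of_nearest (hc : ∀ i j, i < j → j < L → c i < c j) (hj : j < L)
    (hmin : ∀ k < L, |y - c j| ≤ |y - c k|) {i : ℕ} (hi : i ∈ Finset.Ico 1 L)
    (hy : y ≠ (c i + c (i - 1)) / 2) :
    (c i + c (i - 1)) / 2 < y ↔ i ≤ j := by
  obtain ⟨hi1, hiL⟩ := Finset.mem_Ico.1 hi
  have hmono : ∀ {k l}, k ≤ l → l < L → c k ≤ c l := fun hkl hl =>
    hkl.eq_or_lt.elim (fun h => h ▸ le_rfl) fun h => (hc _ _ h hl).le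
  have hgap : c (i - 1) < c i := hc _ _ (by omega) hiL
  constructor
  · intro hy'
    by_contra! hji
    have := abs_sub_lt_abs_sub_of_midpoint_lt (hc _ _ hji hiL)
      (show (c j + c i) / 2 < y by linarith [hmono (show j ≤ i - 1 by omega) (by omega)])
    linarith [hmin i hiL]
  · intro hij
    by_contra! hy'
    have := abs_sub_lt_abs_sub_of_lt_midpoint (hc (i - 1) j (by omega) hj)
      (show y < (c (i - 1) + c j) / 2 by linarith [hmono hij hj, lt_of_le_of_ne hy' hy])
    linarith [hmin (i - 1) (by omega)]

lemma eq_add_sum_ite_of_nearest (hc : ∀ i j, i < j → j < L → c i < c j) (hj : j < L)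
    (hmin : ∀ k < L, |y - c j| ≤ |y - c k|)
    (hy : ∀ i ∈ Finset.Ico 1 L, y ≠ (c i + c (i - 1)) / 2) :
    c j = c 0 + ∑ i ∈ Finset.Ico 1 L,
      if (c i + c (i - 1)) / 2 < y then c i - c (i - 1) else 0 := by
  rw [eq_add_sum_Ico_ite_sub c hj]
  congr 1
  exact Finset.sum_congr rfl fun i hi =>
    if_congr (midpoint_lt_iff_le_of_nearest hc hj hmin hi (hy i hi)).symm rfl rfl

end NearestPoint

theorem gaussian_nearest_point_stein_general
    (L : ℕ) (c : ℕ → ℝ)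
    (hc : ∀ i j, i < j → j < L → c i < c j)
    (σ : ℝ) (hσ : 0 < σ)
    (N : ℝ → ℝ)
    (hNmem : ∀ y, ∃ i < L, N y = c i)
    (hNmin : ∀ y, ∀ i < L, |y - N y| ≤ |y - c i|) :
    ∫ z : ℝ, N (σ * z) * z * (Real.exp (-z ^ 2 / 2) / Real.sqrt (2 * Real.pi))
      = (1 / Real.sqrt (2 * Real.pi)) * ∑ i ∈ Finset.Ico 1 L,
          (c i - c (i - 1)) * Real.exp (-(c i + c (i - 1)) ^ 2 / (8 * σ ^ 2)) := by
  set t : ℕ → ℝ := fun i => (c i + c (i - 1)) / 2 / σ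
  have hstep : ∀ᵐ z : ℝ, N (σ * z)
      = c 0 + ∑ i ∈ Finset.Ico 1 L, (Ioi (t i)).indicator (fun _ => c i - c (i - 1)) z := by
    filter_upwards [((Finset.Ico 1 L).image t).countable_toSet.ae_notMem volume] with z hz
    obtain ⟨j, hj, hNj⟩ := hNmem (σ * z)
    have hy : ∀ i ∈ Finset.Ico 1 L, σ * z ≠ (c i + c (i - 1)) / 2 := fun i hi h =>
      hz (Finset.mem_image.2 ⟨i, hi, by simp only [t, ← h]; field_simp⟩)
    rw [hNj, eq_add_sum_ite_of_nearest hc hj (hNj ▸ hNmin _) hy]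
    simp only [t, indicator_apply, mem_Ioi, div_lt_iff₀ hσ, mul_comm z σ]
  calc _ = (∫ z : ℝ, (c 0 + ∑ i ∈ Finset.Ico 1 L,
          (Ioi (t i)).indicator (fun _ => c i - c (i - 1)) z) * (z * exp (-z ^ 2 / 2)))
          / √(2 * π) := by
        rw [← integral_div]
        exact integral_congr_ae (hstep.mono fun z hz => by simp only [hz]; ring)
    _ = _ := by
        rw [integral_step_mul_mul_exp_neg_sq_div_two, one_div_mul_eq_div]
        congr 2 with i
        simp only [t]
        field_simp
        ring_nf

/-- Gaussian average of the nearest lattice point times `z` (a Stein-type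
identity): for `B = {c₀ < c₁ < ⋯ < c_{L-1}}` and any nearest-point selector `N`,
`∫ N(σz) z e^{-z²/2} dz/√(2π)
  = (1/√(2π)) Σ_{i=1}^{L-1} (cᵢ - c_{i-1}) exp(-(cᵢ + c_{i-1})²/(8σ²))`. -/
theorem gaussian_nearest_point_stein
    (L : ℕ) (hL : 1 ≤ L) (c : ℕ → ℝ)
    (hc : ∀ i j, i < j → j < L → c i < c j)
    (σ : ℝ) (hσ : 0 < σ)
    (N : ℝ → ℝ)
    (hNmem : ∀ y, ∃ i < L, N y = c i)
    (hNmin : ∀ y, ∀ i < L, |y - N y| ≤ |y - c i|) :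
    ∫ z : ℝ, N (σ * z) * z * (Real.exp (-z ^ 2 / 2) / Real.sqrt (2 * Real.pi))
      = (1 / Real.sqrt (2 * Real.pi)) * ∑ i ∈ Finset.Ico 1 L,
          (c i - c (i - 1)) * Real.exp (-(c i + c (i - 1)) ^ 2 / (8 * σ ^ 2)) :=
  gaussian_nearest_point_stein_general L c hc σ hσ N hNmem hNmin
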